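/- arXiv:1501.05185 — 3 statements merged into one kernel-verified Lean document; each statement's English description precedes it below -/
import Mathlib

section
/- Let 𝒜₁, 𝒜₂ be full additive subcategories of an additive category 𝒜, and let A = (A₁ ⊕ A₂, p) be an object of the idempotent completion of the lower triangular category 𝔏𝔗(𝒜₁,𝒜₂), where p = [[p₁₁,0],[p₂₁,p₂₂]]. Then the sequence 0 → (A₂,p₂₂) → A → (A₁,p₁₁) → 0, with maps given by the column (0, p₂₂)ᵀ and the row (p₁₁, 0), is split exact: the map with components π = (p₁₁, 0) and ρ = (p₂₂p₂₁, p₂₂) is an isomorphism from A to (A₁,p₁₁) ⊕ (A₂,p₂₂) in Idem 𝔏𝔗(𝒜₁,𝒜₂), with inverse the matrix [[p₁₁,0],[p₂₁p₁₁,p₂₂]]. -/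
open CategoryTheory CategoryTheory.Idempotents

universe v u

variable {A : Type u} [Category.{v} A] [Preadditive A]

/-- An object of the lower triangular category `𝔏𝔗(𝒜₁, 𝒜₂)`: a chosen direct sum
`F₁ ⊕ F₂` with `F₁` in the full subcategory on `P₁` and `F₂` in the one on `P₂`. -/
structure LTObj (P₁ P₂ : A → Prop) : Type u where
  X₁ : A
  mem₁ : P₁ X₁
  X₂ : A
  mem₂ : P₂ X₂

variable {P₁ P₂ : A → Prop}

/-- A morphism of the lower triangular category: a lower triangular matrix
`[[f₁₁, 0], [f₂₁, f₂₂]]`. -/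
@[ext]
structure LTHom (F G : LTObj P₁ P₂) : Type v where
  f₁₁ : F.X₁ ⟶ G.X₁
  f₂₁ : F.X₁ ⟶ G.X₂
  f₂₂ : F.X₂ ⟶ G.X₂

instance : Category (LTObj P₁ P₂) where
  Hom := LTHom
  id F := ⟨𝟙 _, 0, 𝟙 _⟩
  comp {F G H} f g := ⟨f.f₁₁ ≫ g.f₁₁, f.f₁₁ ≫ g.f₂₁ + f.f₂₁ ≫ g.f₂₂, f.f₂₂ ≫ g.f₂₂⟩
  id_comp f := by apply LTHom.ext <;> simp
  comp_id f := by apply LTHom.ext <;> simp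
  assoc f g h := by
    apply LTHom.ext <;> simp [Preadditive.add_comp, Preadditive.comp_add] <;> abel

namespace LTHom

@[simp] lemma comp_f₁₁ {F G H : LTObj P₁ P₂} (f : F ⟶ G) (g : G ⟶ H) :
    (f ≫ g).f₁₁ = f.f₁₁ ≫ g.f₁₁ := rfl
@[simp] lemma comp_f₂₁ {F G H : LTObj P₁ P₂} (f : F ⟶ G) (g : G ⟶ H) :
    (f ≫ g).f₂₁ = f.f₁₁ ≫ g.f₂₁ + f.f₂₁ ≫ g.f₂₂ := rfl
@[simp] lemma comp_f₂₂ {F G H : LTObj P₁ P₂} (f : F ⟶ G) (g : G ⟶ H) :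
    (f ≫ g).f₂₂ = f.f₂₂ ≫ g.f₂₂ := rfl
@[simp] lemma id_f₁₁ {F : LTObj P₁ P₂} : LTHom.f₁₁ (𝟙 F) = 𝟙 F.X₁ := rfl
@[simp] lemma id_f₂₁ {F : LTObj P₁ P₂} : LTHom.f₂₁ (𝟙 F) = 0 := rfl
@[simp] lemma id_f₂₂ {F : LTObj P₁ P₂} : LTHom.f₂₂ (𝟙 F) = 𝟙 F.X₂ := rfl

/-- Morphism groups of the lower triangular category. -/
instance instAddCommGroup (F G : LTObj P₁ P₂) : AddCommGroup (F ⟶ G) :=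
  let e : (F ⟶ G) ≃ (F.X₁ ⟶ G.X₁) × (F.X₁ ⟶ G.X₂) × (F.X₂ ⟶ G.X₂) :=
    { toFun := fun f => (f.f₁₁, f.f₂₁, f.f₂₂)
      invFun := fun x => ⟨x.1, x.2.1, x.2.2⟩
      left_inv := fun f => rfl
      right_inv := fun x => rfl }
  e.addCommGroup

@[simp] lemma add_f₁₁ {F G : LTObj P₁ P₂} (f g : F ⟶ G) : (f + g).f₁₁ = f.f₁₁ + g.f₁₁ := rfl
@[simp] lemma add_f₂₁ {F G : LTObj P₁ P₂} (f g : F ⟶ G) : (f + g).f₂₁ = f.f₂₁ + g.f₂₁ := rfl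
@[simp] lemma add_f₂₂ {F G : LTObj P₁ P₂} (f g : F ⟶ G) : (f + g).f₂₂ = f.f₂₂ + g.f₂₂ := rfl
@[simp] lemma zero_f₁₁ {F G : LTObj P₁ P₂} : (0 : F ⟶ G).f₁₁ = 0 := rfl
@[simp] lemma zero_f₂₁ {F G : LTObj P₁ P₂} : (0 : F ⟶ G).f₂₁ = 0 := rfl
@[simp] lemma zero_f₂₂ {F G : LTObj P₁ P₂} : (0 : F ⟶ G).f₂₂ = 0 := rfl

end LTHom

/-- The lower triangular category is additive (preadditive). -/
instance : Preadditive (LTObj P₁ P₂) where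
  add_comp := by intros; apply LTHom.ext <;> simp [Preadditive.add_comp, Preadditive.comp_add] <;> abel
  comp_add := by intros; apply LTHom.ext <;> simp [Preadditive.add_comp, Preadditive.comp_add] <;> abel

/-- The "diagonal" object `(A₁,p₁₁) ⊕ (A₂,p₂₂)` of `Idem 𝔏𝔗(𝒜₁,𝒜₂)` associated to an
object `A = (A₁ ⊕ A₂, [[p₁₁,0],[p₂₁,p₂₂]])`. -/
def diagObj (P : Karoubi (LTObj P₁ P₂)) : Karoubi (LTObj P₁ P₂) where
  X := P.X
  p := ⟨P.p.f₁₁, 0, P.p.f₂₂⟩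
  idem := by
    have h11 := congrArg LTHom.f₁₁ P.idem
    have h22 := congrArg LTHom.f₂₂ P.idem
    simp only [LTHom.comp_f₁₁] at h11
    simp only [LTHom.comp_f₂₂] at h22
    apply LTHom.ext <;> simp [h11, h22]

/-! Composing diagrammatically, `p ≫ p = p` says that `p₁₁` and `p₂₂` are idempotent and that
`p₁₁ p₂₁ + p₂₁ p₂₂ = p₂₁`. Pre-composing this with `p₁₁` and post-composing with `p₂₂` gives
`2 p₁₁ p₂₁ p₂₂ = p₁₁ p₂₁ p₂₂`, so `p₁₁ p₂₁ p₂₂ = 0`. These relations are all that is needed to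
check, entry by entry, that both matrices are morphisms of the idempotent completion and that
they are mutually inverse. -/

theorem CategoryTheory.Preadditive.comp_comp_eq_zero_of_comp_add_comp_eq {C : Type*} [Category C]
    [Preadditive C] {X Y : C} {a : X ⟶ X} {b : X ⟶ Y} {d : Y ⟶ Y} (ha : a ≫ a = a)
    (hd : d ≫ d = d) (hb : a ≫ b + b ≫ d = b) : a ≫ b ≫ d = 0 := by
  have h : a ≫ b ≫ d + a ≫ b ≫ d = a ≫ b ≫ d := by
    simpa only [Preadditive.comp_add, Preadditive.add_comp, Category.assoc, reassoc_of% ha, hd]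
      using congrArg (fun x => a ≫ x ≫ d) hb
  exact add_eq_left.mp h

namespace LTHom

variable {F : LTObj P₁ P₂} {e : F ⟶ F}

lemma f₁₁_comp_f₁₁_of_idem (he : e ≫ e = e) : e.f₁₁ ≫ e.f₁₁ = e.f₁₁ := congrArg f₁₁ he

lemma f₂₂_comp_f₂₂_of_idem (he : e ≫ e = e) : e.f₂₂ ≫ e.f₂₂ = e.f₂₂ := congrArg f₂₂ he

lemma f₁₁_comp_f₂₁_add_f₂₁_comp_f₂₂_of_idem (he : e ≫ e = e) :
    e.f₁₁ ≫ e.f₂₁ + e.f₂₁ ≫ e.f₂₂ = e.f₂₁ :=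
  congrArg f₂₁ he

lemma f₁₁_comp_f₂₁_comp_f₂₂_of_idem (he : e ≫ e = e) : e.f₁₁ ≫ e.f₂₁ ≫ e.f₂₂ = 0 :=
  Preadditive.comp_comp_eq_zero_of_comp_add_comp_eq (f₁₁_comp_f₁₁_of_idem he)
    (f₂₂_comp_f₂₂_of_idem he) (f₁₁_comp_f₂₁_add_f₂₁_comp_f₂₂_of_idem he)

end LTHom

section DiagObjIso

open LTHom

variable (P : Karoubi (LTObj P₁ P₂))

def toDiagObj : P ⟶ diagObj P where
  f := ⟨P.p.f₁₁, P.p.f₂₁ ≫ P.p.f₂₂, P.p.f₂₂⟩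
  comm := by
    apply LTHom.ext <;> simp [diagObj, f₁₁_comp_f₁₁_of_idem P.idem,
      f₂₂_comp_f₂₂_of_idem P.idem, f₁₁_comp_f₂₁_comp_f₂₂_of_idem P.idem]

def ofDiagObj : diagObj P ⟶ P where
  f := ⟨P.p.f₁₁, P.p.f₁₁ ≫ P.p.f₂₁, P.p.f₂₂⟩
  comm := by
    apply LTHom.ext <;> simp [diagObj, f₁₁_comp_f₁₁_of_idem P.idem, f₂₂_comp_f₂₂_of_idem P.idem,
      reassoc_of% f₁₁_comp_f₁₁_of_idem P.idem, f₁₁_comp_f₂₁_comp_f₂₂_of_idem P.idem]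

lemma toDiagObj_comp_ofDiagObj : toDiagObj P ≫ ofDiagObj P = 𝟙 P := by
  apply Karoubi.hom_ext
  apply LTHom.ext <;> simp [toDiagObj, ofDiagObj, diagObj, f₁₁_comp_f₁₁_of_idem P.idem,
    f₂₂_comp_f₂₂_of_idem P.idem, reassoc_of% f₁₁_comp_f₁₁_of_idem P.idem,
    f₁₁_comp_f₂₁_add_f₂₁_comp_f₂₂_of_idem P.idem]

lemma ofDiagObj_comp_toDiagObj : ofDiagObj P ≫ toDiagObj P = 𝟙 (diagObj P) := by
  apply Karoubi.hom_ext
  apply LTHom.ext <;> simp [toDiagObj, ofDiagObj, diagObj, f₁₁_comp_f₁₁_of_idem P.idem,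
    f₂₂_comp_f₂₂_of_idem P.idem, f₁₁_comp_f₂₁_comp_f₂₂_of_idem P.idem]

def diagObjIso : P ≅ diagObj P where
  hom := toDiagObj P
  inv := ofDiagObj P
  hom_inv_id := toDiagObj_comp_ofDiagObj P
  inv_hom_id := ofDiagObj_comp_toDiagObj P

end DiagObjIso

/-- For an object `A = (A₁ ⊕ A₂, p)` of `Idem 𝔏𝔗(𝒜₁,𝒜₂)` with
`p = [[p₁₁,0],[p₂₁,p₂₂]]`, the sequence `0 → (A₂,p₂₂) → A → (A₁,p₁₁) → 0` (maps:
the column `(0,p₂₂)ᵀ` and the row `(p₁₁,0)`) is split exact:  the morphism with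
components `π = (p₁₁, 0)` and `ρ = (p₂₂p₂₁, p₂₂)`, i.e. the matrix
`[[p₁₁,0],[p₂₂p₂₁,p₂₂]]`, is an isomorphism from `A` to `(A₁,p₁₁) ⊕ (A₂,p₂₂)`
in `Idem 𝔏𝔗(𝒜₁,𝒜₂)`, with inverse the matrix `[[p₁₁,0],[p₂₁p₁₁,p₂₂]]`. -/
theorem lower_triangular_split_exact (P : Karoubi (LTObj P₁ P₂)) :
    ∃ e : P ≅ diagObj P,
      e.hom.f = LTHom.mk P.p.f₁₁ (P.p.f₂₁ ≫ P.p.f₂₂) P.p.f₂₂ ∧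
      e.inv.f = LTHom.mk P.p.f₁₁ (P.p.f₁₁ ≫ P.p.f₂₁) P.p.f₂₂ :=
  ⟨diagObjIso P, rfl, rfl⟩
end

section
/- Let K be a Q-systematic ring and a ∈ Q with 1 ∈ K_a·K_{a⁻¹}. Then K_a is a finitely generated projective right K_1-module. -/
open Pointwise MulOpposite

universe u v

variable {Q : Type u} [Group Q] {K : Type v} [Ring K]

/-- The degree-one component `K_1` of a `Q`-systematic ring, as a subring of `K`. -/
def systDegreeOne (𝒜 : Q → AddSubgroup K)
    (hmul : ∀ {g h : Q} {a b : K}, a ∈ 𝒜 g → b ∈ 𝒜 h → a * b ∈ 𝒜 (g * h))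
    (hone : (1 : K) ∈ 𝒜 1) : Subring K where
  carrier := 𝒜 1
  add_mem' := fun ha hb => (𝒜 1).add_mem ha hb
  zero_mem' := (𝒜 1).zero_mem
  neg_mem' := fun ha => (𝒜 1).neg_mem ha
  one_mem' := hone
  mul_mem' := fun ha hb => by simpa using hmul ha hb

/-- The component `K_a` of a `Q`-systematic ring is a right `K_1`-module (i.e. a module over
`(K_1)ᵐᵒᵖ`) via multiplication in `K`. -/
def systComponentModule (𝒜 : Q → AddSubgroup K)
    (hmul : ∀ {g h : Q} {a b : K}, a ∈ 𝒜 g → b ∈ 𝒜 h → a * b ∈ 𝒜 (g * h))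
    (hone : (1 : K) ∈ 𝒜 1) (a : Q) :
    Module (systDegreeOne 𝒜 hmul hone)ᵐᵒᵖ (𝒜 a) where
  smul r m := ⟨m.1 * (r.unop : K), by
    simpa using hmul m.2 (show (r.unop : K) ∈ 𝒜 1 from r.unop.2)⟩
  one_smul m := by apply Subtype.ext; simp [HSMul.hSMul, SMul.smul]
  mul_smul r s m := by apply Subtype.ext; simp [HSMul.hSMul, SMul.smul, mul_assoc]
  smul_zero r := by apply Subtype.ext; simp [HSMul.hSMul, SMul.smul]
  smul_add r m n := by apply Subtype.ext; simp [HSMul.hSMul, SMul.smul, add_mul]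
  add_smul r s m := by apply Subtype.ext; simp [HSMul.hSMul, SMul.smul, mul_add]
  zero_smul m := by apply Subtype.ext; simp [HSMul.hSMul, SMul.smul]

/-!
Writing `1 = ∑ xᵢ yᵢ` with `xᵢ ∈ K_a`, `yᵢ ∈ K_{a⁻¹}` gives a finite dual basis of `K_a`:
the maps `m ↦ yᵢ m` land in `K_1`, and `m = ∑ xᵢ (yᵢ m)` for every `m ∈ K_a`. Hence `K_a` is a
direct summand of `K_1ⁿ` (split by `m ↦ (yᵢ m)ᵢ` and `c ↦ ∑ xᵢ cᵢ`).
-/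

theorem Module.finite_and_projective_of_sum_smul_eq {R M ι : Type*} [Semiring R]
    [AddCommMonoid M] [Module R M] [Fintype ι] (x : ι → M) (f : ι → M →ₗ[R] R)
    (hf : ∀ m, ∑ i, f i m • x i = m) : Module.Finite R M ∧ Module.Projective R M := by
  have hsplit : Fintype.linearCombination R x ∘ₗ LinearMap.pi f = LinearMap.id :=
    LinearMap.ext fun m => by simp [Fintype.linearCombination_apply, hf]
  exact ⟨.of_surjective _ (LinearMap.surjective_of_comp_eq_id _ _ hsplit),
    .of_split _ _ hsplit⟩

theorem AddSubgroup.exists_fin_sum_mul_eq_of_mem_closure {R : Type*} [NonUnitalNonAssocRing R]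
    {A B : AddSubgroup R} {z : R} (hz : z ∈ closure ((A : Set R) * (B : Set R))) :
    ∃ (n : ℕ) (x y : Fin n → R), (∀ i, x i ∈ A) ∧ (∀ i, y i ∈ B) ∧ ∑ i, x i * y i = z := by
  have hneg : -((A : Set R) * (B : Set R)) ⊆ (A : Set R) * (B : Set R) := by
    rintro _ ⟨u, hu, v, hv, huv⟩
    exact ⟨-u, A.neg_mem hu, v, hv, by simp only [neg_mul, huv, neg_neg]⟩
  rw [← mem_toAddSubmonoid, closure_toAddSubmonoid, Set.union_eq_left.2 hneg] at hz
  obtain ⟨l, hl, rfl⟩ := AddSubmonoid.exists_list_of_mem_closure hz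
  choose x hx y hy hxy using fun i : Fin l.length => hl _ (l.getElem_mem i.2)
  exact ⟨l.length, x, y, hx, hy, by simp only [hxy, Fin.sum_univ_getElem]⟩

section Systematic

variable (𝒜 : Q → AddSubgroup K)
    (hmul : ∀ {g h : Q} {a b : K}, a ∈ 𝒜 g → b ∈ 𝒜 h → a * b ∈ 𝒜 (g * h))
    (hone : (1 : K) ∈ 𝒜 1)

def systCoord {a : Q} {y : K} (hy : y ∈ 𝒜 a⁻¹) :
    letI := systComponentModule 𝒜 hmul hone a
    𝒜 a →ₗ[(systDegreeOne 𝒜 hmul hone)ᵐᵒᵖ] (systDegreeOne 𝒜 hmul hone)ᵐᵒᵖ :=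
  letI := systComponentModule 𝒜 hmul hone a
  { toFun m := op ⟨y * m, show y * m ∈ 𝒜 1 by simpa using hmul hy m.2⟩
    map_add' m₁ m₂ := unop_injective <| Subtype.ext <| mul_add _ _ _
    map_smul' r m := unop_injective <| Subtype.ext <| (mul_assoc _ _ _).symm }

theorem systCoord_sum_smul {a : Q} {n : ℕ} {x y : Fin n → K} (hx : ∀ i, x i ∈ 𝒜 a)
    (hy : ∀ i, y i ∈ 𝒜 a⁻¹) (hxy : ∑ i, x i * y i = 1) (m : 𝒜 a) :
    letI := systComponentModule 𝒜 hmul hone a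
    ∑ i, systCoord 𝒜 hmul hone (hy i) m • (⟨x i, hx i⟩ : 𝒜 a) = m := by
  let := systComponentModule 𝒜 hmul hone a
  refine Subtype.ext ?_
  rw [AddSubmonoidClass.coe_finsetSum]
  change ∑ i, x i * (y i * m) = m
  simp only [← mul_assoc, ← Finset.sum_mul, hxy, one_mul]

end Systematic

theorem component_fg_projective_general (𝒜 : Q → AddSubgroup K)
    (hmul : ∀ {g h : Q} {a b : K}, a ∈ 𝒜 g → b ∈ 𝒜 h → a * b ∈ 𝒜 (g * h))
    (hone : (1 : K) ∈ 𝒜 1) (a : Q)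
    (h : (1 : K) ∈ AddSubgroup.closure ((𝒜 a : Set K) * (𝒜 a⁻¹ : Set K))) :
    @Module.Finite (systDegreeOne 𝒜 hmul hone)ᵐᵒᵖ (𝒜 a) _ _
        (systComponentModule 𝒜 hmul hone a) ∧
      @Module.Projective (systDegreeOne 𝒜 hmul hone)ᵐᵒᵖ _ (𝒜 a) _
        (systComponentModule 𝒜 hmul hone a) := by
  let := systComponentModule 𝒜 hmul hone a
  obtain ⟨n, x, y, hx, hy, hxy⟩ := AddSubgroup.exists_fin_sum_mul_eq_of_mem_closure h
  exact Module.finite_and_projective_of_sum_smul_eq (fun i => ⟨x i, hx i⟩)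
    (fun i => systCoord 𝒜 hmul hone (hy i)) (systCoord_sum_smul 𝒜 hmul hone hx hy hxy)

/-- Let `K` be a `Q`-systematic ring and `a ∈ Q` with `1 ∈ K_a·K_{a⁻¹}` (finite sums of
products).  Then `K_a` is a finitely generated projective right `K_1`-module. -/
theorem component_fg_projective (𝒜 : Q → AddSubgroup K)
    (hsup : (⨆ g, 𝒜 g) = ⊤)
    (hmul : ∀ {g h : Q} {a b : K}, a ∈ 𝒜 g → b ∈ 𝒜 h → a * b ∈ 𝒜 (g * h))
    (hone : (1 : K) ∈ 𝒜 1) (a : Q)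
    (h : (1 : K) ∈ AddSubgroup.closure ((𝒜 a : Set K) * (𝒜 a⁻¹ : Set K))) :
    @Module.Finite (systDegreeOne 𝒜 hmul hone)ᵐᵒᵖ (𝒜 a) _ _
        (systComponentModule 𝒜 hmul hone a) ∧
      @Module.Projective (systDegreeOne 𝒜 hmul hone)ᵐᵒᵖ _ (𝒜 a) _
        (systComponentModule 𝒜 hmul hone a) :=
  component_fg_projective_general 𝒜 hmul hone a h
end

section
/- Let K be a Q-systematic ring and a ∈ Q with 1 ∈ K_{a⁻¹}·K_a. Then the natural map ν : K_{a⁻¹} ⊗_{K_1} K → ⟨a⟩K, s ⊗ r ↦ sr, is an isomorphism of right K-modules (indeed of Q-systematic K-modules), where ⟨a⟩K denotes the a-shift of K. -/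
open Pointwise

universe u v w

/-!
Write `1 = ∑ sᵢ tᵢ` with `sᵢ ∈ K_{a⁻¹}` and `tᵢ ∈ K_a`, so that `r = ∑ sᵢ (tᵢ r)` for every
`r ∈ K`. A `K_1`-balanced biadditive map `f` then factors through multiplication via
`r ↦ ∑ f(sᵢ, tᵢ r)`: since `tᵢ s ∈ K_1`, balancing moves it across, and `∑ sᵢ tᵢ s = s`.
The same identity, applied to `r ∈ K_{a⁻¹q}` with `tᵢ r ∈ K_q`, gives `K_{a⁻¹q} ⊆ K_{a⁻¹} K_q`.
-/

namespace AddSubgroup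

theorem exists_sum_mul_eq_of_mem_closure_mul {R : Type*} [NonUnitalNonAssocRing R]
    {S T : AddSubgroup R} {x : R} (hx : x ∈ closure ((S : Set R) * (T : Set R))) :
    ∃ (n : ℕ) (s : Fin n → S) (t : Fin n → T), ∑ i, (s i : R) * t i = x := by
  induction hx using closure_induction with
  | mem y hy =>
    obtain ⟨s, hs, t, ht, rfl⟩ := hy
    exact ⟨1, fun _ => ⟨s, hs⟩, fun _ => ⟨t, ht⟩, by simp⟩
  | zero => exact ⟨0, ![], ![], by simp⟩
  | add x y _ _ ihx ihy =>
    obtain ⟨n, s, t, rfl⟩ := ihx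
    obtain ⟨m, s', t', rfl⟩ := ihy
    exact ⟨n + m, Fin.append s s', Fin.append t t', by simp [Fin.sum_univ_add]⟩
  | neg x _ ihx =>
    obtain ⟨n, s, t, rfl⟩ := ihx
    exact ⟨n, -s, t, by simp⟩

theorem closure_mul_eq_of_one_mem_closure_mul {R : Type*} [Ring R] {S T U V : AddSubgroup R}
    (h : (1 : R) ∈ closure ((S : Set R) * (T : Set R))) (hSU : (S : Set R) * (U : Set R) ⊆ V)
    (hTV : (T : Set R) * (V : Set R) ⊆ U) : closure ((S : Set R) * (U : Set R)) = V := by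
  refine le_antisymm ((closure_le V).2 hSU) fun x hx => ?_
  have : closure ((S : Set R) * (T : Set R)) ≤
      (closure ((S : Set R) * (U : Set R))).comap (AddMonoidHom.mulRight x) := by
    rw [closure_le]
    rintro _ ⟨s, hs, t, ht, rfl⟩
    simpa [mul_assoc] using subset_closure (Set.mul_mem_mul hs (hTV (Set.mul_mem_mul ht hx)))
  simpa using this h

end AddSubgroup

theorem existsUnique_addMonoidHom_mul_eq_of_one_mem_closure_mul {R : Type*} [Ring R]
    {S T : AddSubgroup R} {B : Set R}
    (h : (1 : R) ∈ AddSubgroup.closure ((S : Set R) * (T : Set R)))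
    (hTS : (T : Set R) * (S : Set R) ⊆ B) (hSB : (S : Set R) * B ⊆ S)
    {P : Type*} [AddCommGroup P] (f : S → R → P)
    (hf₁ : ∀ s s' r, f (s + s') r = f s r + f s' r)
    (hf₂ : ∀ s r r', f s (r + r') = f s r + f s r')
    (hbal : ∀ (s : S) (k : R), k ∈ B → ∀ (r : R) (s' : S),
      (s' : R) = s * k → f s' r = f s (k * r)) :
    ∃! g : R →+ P, ∀ (s : S) (r : R), g (s * r) = f s r := by
  obtain ⟨n, s, t, hst⟩ := AddSubgroup.exists_sum_mul_eq_of_mem_closure_mul h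
  have expand (r : R) : ∑ i, (s i : R) * (t i * r) = r := by
    simp_rw [← mul_assoc, ← Finset.sum_mul, hst, one_mul]
  let fₗ (s : S) : R →+ P := AddMonoidHom.mk' (f s) (hf₂ s)
  let fᵣ (r : R) : S →+ P := AddMonoidHom.mk' (f · r) (hf₁ · · r)
  refine ⟨∑ i, (fₗ (s i)).comp (AddMonoidHom.mulLeft (t i)), fun s₀ r => ?_, fun g hg => ?_⟩
  · have hk (i : Fin n) : (t i : R) * s₀ ∈ B := hTS (Set.mul_mem_mul (t i).2 s₀.2)
    let σ (i : Fin n) : S := ⟨s i * (t i * s₀), hSB (Set.mul_mem_mul (s i).2 (hk i))⟩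
    have hσ : ∑ i, σ i = s₀ := Subtype.ext (by simp [σ, expand])
    calc _ = ∑ i, f (s i) (t i * s₀ * r) := by simp [fₗ, mul_assoc]
      _ = ∑ i, f (σ i) r := Finset.sum_congr rfl fun i _ => (hbal _ _ (hk i) r (σ i) rfl).symm
      _ = f s₀ r := by rw [← hσ]; exact (map_sum (fᵣ r) σ _).symm
  · ext r
    conv_lhs => rw [← expand r]
    simp [hg, fₗ]

theorem shift_eq_tensor_general {Q : Type u} [Group Q] {K : Type v} [Ring K]
    (𝒜 : Q → AddSubgroup K)
    (hmul : ∀ {g h : Q} {a b : K}, a ∈ 𝒜 g → b ∈ 𝒜 h → a * b ∈ 𝒜 (g * h))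
    (a : Q)
    (h : (1 : K) ∈ AddSubgroup.closure ((𝒜 a⁻¹ : Set K) * (𝒜 a : Set K))) :
    (∀ (P : Type w) [AddCommGroup P] (f : ↥(𝒜 a⁻¹) → K → P),
      (∀ s s' r, f (s + s') r = f s r + f s' r) →
      (∀ s r r', f s (r + r') = f s r + f s r') →
      (∀ (s : ↥(𝒜 a⁻¹)) (k : K), k ∈ 𝒜 1 → ∀ (r : K) (s' : ↥(𝒜 a⁻¹)),
        (s' : K) = (s : K) * k → f s' r = f s (k * r)) →
      ∃! g : K →+ P, ∀ (s : ↥(𝒜 a⁻¹)) (r : K), g ((s : K) * r) = f s r) ∧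
    (∀ q : Q, AddSubgroup.closure ((𝒜 a⁻¹ : Set K) * (𝒜 q : Set K)) = 𝒜 (a⁻¹ * q)) := by
  have hmul' {g g' : Q} : (𝒜 g : Set K) * (𝒜 g' : Set K) ⊆ 𝒜 (g * g') := by
    rintro _ ⟨x, hx, y, hy, rfl⟩
    exact hmul hx hy
  refine ⟨fun P _ f => existsUnique_addMonoidHom_mul_eq_of_one_mem_closure_mul h ?_ ?_ f,
    fun q => AddSubgroup.closure_mul_eq_of_one_mem_closure_mul h hmul' ?_⟩
  · simpa using hmul' (g := a) (g' := a⁻¹)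
  · simpa using hmul' (g := a⁻¹) (g' := 1)
  · simpa using hmul' (g := a) (g' := a⁻¹ * q)

/-- Let `K` be a `Q`-systematic ring and `a ∈ Q` with `1 ∈ K_{a⁻¹}·K_a`.  Then the natural
map `ν : K_{a⁻¹} ⊗_{K_1} K → ⟨a⟩K`, `s ⊗ r ↦ s·r`, is an isomorphism of right `K`-modules,
indeed of `Q`-systematic `K`-modules.  Formally: (1) the multiplication map
`K_{a⁻¹} × K → K = ⟨a⟩K` is a universal `K_1`-balanced biadditive map, i.e. it satisfies
the universal property of the tensor product `K_{a⁻¹} ⊗_{K_1} K` (so `ν` is bijective);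
(2) `ν` identifies the degree-`q` part `K_{a⁻¹}·K_q` of the tensor product with the
degree-`q` part `(⟨a⟩K)_q = K_{a⁻¹q}` of the shift `⟨a⟩K`. -/
theorem shift_eq_tensor {Q : Type u} [Group Q] {K : Type v} [Ring K]
    (𝒜 : Q → AddSubgroup K)
    (hsup : (⨆ g, 𝒜 g) = ⊤)
    (hmul : ∀ {g h : Q} {a b : K}, a ∈ 𝒜 g → b ∈ 𝒜 h → a * b ∈ 𝒜 (g * h))
    (hone : (1 : K) ∈ 𝒜 1) (a : Q)
    (h : (1 : K) ∈ AddSubgroup.closure ((𝒜 a⁻¹ : Set K) * (𝒜 a : Set K))) :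
    (∀ (P : Type w) [AddCommGroup P] (f : ↥(𝒜 a⁻¹) → K → P),
      (∀ s s' r, f (s + s') r = f s r + f s' r) →
      (∀ s r r', f s (r + r') = f s r + f s r') →
      (∀ (s : ↥(𝒜 a⁻¹)) (k : K), k ∈ 𝒜 1 → ∀ (r : K) (s' : ↥(𝒜 a⁻¹)),
        (s' : K) = (s : K) * k → f s' r = f s (k * r)) →
      ∃! g : K →+ P, ∀ (s : ↥(𝒜 a⁻¹)) (r : K), g ((s : K) * r) = f s r) ∧
    (∀ q : Q, AddSubgroup.closure ((𝒜 a⁻¹ : Set K) * (𝒜 q : Set K)) = 𝒜 (a⁻¹ * q)) :=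
  shift_eq_tensor_general 𝒜 hmul a h
end
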